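/- The antisymmetric matrix of 1-forms θ with entries θ^1_2 = -(1/2)ω^3 - (1/2)f_y ω^4, θ^1_3 = -(1/2)ω^2 - (1/2)(1+f_p)ω^4, θ^1_4 = -(1/2)f_y ω^2 - (1/2)(1+f_p)ω^3 - f_q ω^4, θ^2_3 = -(1/2)ω^1, θ^2_4 = (1/2)f_y ω^1, θ^3_4 = -(1/2)(1-f_p)ω^1 (and θ^i_j = -θ^j_i) satisfies the torsion-free structure equations dω^i = -Σ_j θ^i_j ∧ ω^j for i = 1,2,3,4. -/

import Mathlib

open ContinuousLinearMap

noncomputable def dcoord (i : Fin 4) : (Fin 4 → ℝ) →L[ℝ] ℝ :=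
  ContinuousLinearMap.proj i

/-- The coframe `ω¹ = dx`, `ω² = dy - p dx`, `ω³ = dp - q dx`, `ω⁴ = dq - f dx`. -/
noncomputable def omegaCoframe (f : (Fin 4 → ℝ) → ℝ) (i : Fin 4) (z : Fin 4 → ℝ) :
    (Fin 4 → ℝ) →L[ℝ] ℝ :=
  ![dcoord 0,
    dcoord 1 - z 2 • dcoord 0,
    dcoord 2 - z 3 • dcoord 0,
    dcoord 3 - f z • dcoord 0] i

noncomputable def extd {E : Type*} [NormedAddCommGroup E] [NormedSpace ℝ E]
    (ω : E → E →L[ℝ] ℝ) (z v w : E) : ℝ :=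
  fderiv ℝ (fun u => ω u w) z v - fderiv ℝ (fun u => ω u v) z w

def wedge {E : Type*} [NormedAddCommGroup E] [NormedSpace ℝ E]
    (α β : E →L[ℝ] ℝ) (v w : E) : ℝ :=
  α v * β w - α w * β v

noncomputable def pd (f : (Fin 4 → ℝ) → ℝ) (i : Fin 4) (z : Fin 4 → ℝ) : ℝ :=
  fderiv ℝ f z (Pi.single i 1)

/-- The connection matrix `θ = (θⁱⱼ)` of 1-forms from the paper, with
`θ¹₂ = -(1/2)ω³ - (1/2)f_y ω⁴`, `θ¹₃ = -(1/2)ω² - (1/2)(1+f_p)ω⁴`,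
`θ¹₄ = -(1/2)f_y ω² - (1/2)(1+f_p)ω³ - f_q ω⁴`, `θ²₃ = -(1/2)ω¹`,
`θ²₄ = (1/2)f_y ω¹`, `θ³₄ = -(1/2)(1-f_p)ω¹`, and `θʲᵢ = -θⁱⱼ`. -/
noncomputable def thetaConn (f : (Fin 4 → ℝ) → ℝ) (z : Fin 4 → ℝ) :
    Matrix (Fin 4) (Fin 4) ((Fin 4 → ℝ) →L[ℝ] ℝ) :=
  let ω := fun i => omegaCoframe f i z
  let θ12 := -(1/2 : ℝ) • ω 2 - ((1/2) * pd f 1 z) • ω 3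
  let θ13 := -(1/2 : ℝ) • ω 1 - ((1/2) * (1 + pd f 2 z)) • ω 3
  let θ14 := -((1/2) * pd f 1 z) • ω 1 - ((1/2) * (1 + pd f 2 z)) • ω 2
      - (pd f 3 z) • ω 3
  let θ23 := -(1/2 : ℝ) • ω 0
  let θ24 := ((1/2) * pd f 1 z) • ω 0
  let θ34 := -((1/2) * (1 - pd f 2 z)) • ω 0
  !![0, θ12, θ13, θ14;
     -θ12, 0, θ23, θ24;
     -θ13, -θ23, 0, θ34;
     -θ14, -θ24, -θ34, 0]


private lemma fderiv_coordmul (z v : Fin 4 → ℝ) (k : Fin 4) (a c : ℝ) :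
    fderiv ℝ (fun u : Fin 4 → ℝ => a - u k * c) z v = -(c * v k) := by
  have h : HasFDerivAt (fun u : Fin 4 → ℝ => a - u k * c)
      ((0 : (Fin 4 → ℝ) →L[ℝ] ℝ) - c • dcoord k) z :=
    (hasFDerivAt_const a z).sub (((dcoord k).hasFDerivAt).mul_const c)
  rw [h.fderiv]
  simp [dcoord]

private lemma fderiv_fmul (f : (Fin 4 → ℝ) → ℝ) (hf : ContDiff ℝ (⊤ : ℕ∞) f)
    (z v : Fin 4 → ℝ) (a c : ℝ) :
    fderiv ℝ (fun u : Fin 4 → ℝ => a - f u * c) z v = -(c * fderiv ℝ f z v) := by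
  have h : HasFDerivAt (fun u : Fin 4 → ℝ => a - f u * c)
      ((0 : (Fin 4 → ℝ) →L[ℝ] ℝ) - c • fderiv ℝ f z) z :=
    (hasFDerivAt_const a z).sub
      (((hf.differentiable (by simp) z).hasFDerivAt).mul_const c)
  rw [h.fderiv]
  simp

private lemma fderiv_expand (f : (Fin 4 → ℝ) → ℝ) (z u : Fin 4 → ℝ) :
    fderiv ℝ f z u = ∑ i, u i * pd f i z := by
  have h : u = ∑ i : Fin 4, u i • (Pi.single i (1:ℝ) : Fin 4 → ℝ) := by
    funext j
    simp [Finset.sum_apply, Pi.single_apply]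
  conv_lhs => rw [h]
  simp [pd, smul_eq_mul]

set_option maxHeartbeats 2000000 in
/-- The antisymmetric matrix of 1-forms `θ` satisfies the torsion-free structure
equations `dωⁱ = -Σⱼ θⁱⱼ ∧ ωʲ` for `i = 1,2,3,4`. -/
theorem thetaConn_structure_equations
    (f : (Fin 4 → ℝ) → ℝ) (hf : ContDiff ℝ (⊤ : ℕ∞) f) :
    (∀ (z : Fin 4 → ℝ) (i j : Fin 4), thetaConn f z i j = -thetaConn f z j i) ∧
    ∀ (i : Fin 4) (z v w : Fin 4 → ℝ),
      extd (omegaCoframe f i) z v w =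
        -∑ j : Fin 4, wedge (thetaConn f z i j) (omegaCoframe f j z) v w := by
  constructor
  · intro z i j
    fin_cases i <;> fin_cases j <;> simp [thetaConn]
  · intro i z v w
    have h0 : ∀ a : Fin 4 → ℝ, (fun u => omegaCoframe f 0 u a) = fun _ => a 0 := by
      intro a; funext u; simp [omegaCoframe, dcoord]
    have h1 : ∀ a : Fin 4 → ℝ,
        (fun u => omegaCoframe f 1 u a) = fun u => a 1 - u 2 * a 0 := by
      intro a; funext u; simp [omegaCoframe, dcoord]
    have h2 : ∀ a : Fin 4 → ℝ,
        (fun u => omegaCoframe f 2 u a) = fun u => a 2 - u 3 * a 0 := by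
      intro a; funext u; simp [omegaCoframe, dcoord]
    have h3 : ∀ a : Fin 4 → ℝ,
        (fun u => omegaCoframe f 3 u a) = fun u => a 3 - f u * a 0 := by
      intro a; funext u; simp [omegaCoframe, dcoord]
    have hi : i = 0 ∨ i = 1 ∨ i = 2 ∨ i = 3 := by fin_cases i <;> simp
    rcases hi with rfl | rfl | rfl | rfl
    · simp only [extd, h0, fderiv_const, Pi.zero_apply,
        ContinuousLinearMap.zero_apply]
      simp [thetaConn, wedge, omegaCoframe, dcoord, Fin.sum_univ_four]
      ring
    · simp only [extd, h1]
      rw [fderiv_coordmul z v 2 (w 1) (w 0), fderiv_coordmul z w 2 (v 1) (v 0)]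
      simp [thetaConn, wedge, omegaCoframe, dcoord, Fin.sum_univ_four]
      ring
    · simp only [extd, h2]
      rw [fderiv_coordmul z v 3 (w 2) (w 0), fderiv_coordmul z w 3 (v 2) (v 0)]
      simp [thetaConn, wedge, omegaCoframe, dcoord, Fin.sum_univ_four]
      ring
    · simp only [extd, h3]
      rw [fderiv_fmul f hf z v (w 3) (w 0), fderiv_fmul f hf z w (v 3) (v 0),
        fderiv_expand f z v, fderiv_expand f z w]
      simp [thetaConn, wedge, omegaCoframe, dcoord, Fin.sum_univ_four]
      ring
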